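/- Let m₁ = m₀ + P₁A₁ᵀ(d₁ − A₁m₀) be the recursively updated model. Then m₁ minimizes the combined objective ‖A₀m − d₀‖² + ‖A₁m − d₁‖² over m ∈ ℝᴹ, i.e., the recursive update yields the exact batch least-squares solution. -/
import Mathlib
open Matrix

lemma aux_lsq {N₀ N₁ M : ℕ} (A₀ : Matrix (Fin N₀) (Fin M) ℝ) (A₁ : Matrix (Fin N₁) (Fin M) ℝ)
    (d₀ : Fin N₀ → ℝ) (d₁ : Fin N₁ → ℝ) (m : Fin M → ℝ)
    (hnorm : A₀ᵀ *ᵥ (A₀ *ᵥ m - d₀) + A₁ᵀ *ᵥ (A₁ *ᵥ m - d₁) = 0) (x : Fin M → ℝ) :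
    (A₀ *ᵥ m - d₀) ⬝ᵥ (A₀ *ᵥ m - d₀) + (A₁ *ᵥ m - d₁) ⬝ᵥ (A₁ *ᵥ m - d₁)
      ≤ (A₀ *ᵥ x - d₀) ⬝ᵥ (A₀ *ᵥ x - d₀) + (A₁ *ᵥ x - d₁) ⬝ᵥ (A₁ *ᵥ x - d₁) := by
  set e := x - m with he
  have h0 : A₀ *ᵥ x - d₀ = A₀ *ᵥ e + (A₀ *ᵥ m - d₀) := by
    rw [he, mulVec_sub]; abel
  have h1 : A₁ *ᵥ x - d₁ = A₁ *ᵥ e + (A₁ *ᵥ m - d₁) := by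
    rw [he, mulVec_sub]; abel
  have key : ∀ {n : ℕ} (A : Matrix (Fin n) (Fin M) ℝ) (w : Fin n → ℝ),
      (A *ᵥ e) ⬝ᵥ w = (Aᵀ *ᵥ w) ⬝ᵥ e := by
    intro n A w
    rw [dotProduct_comm, dotProduct_mulVec, mulVec_transpose, dotProduct_comm]
  have cross : (A₀ *ᵥ e) ⬝ᵥ (A₀ *ᵥ m - d₀) + (A₁ *ᵥ e) ⬝ᵥ (A₁ *ᵥ m - d₁) = 0 := by
    rw [key, key, ← add_dotProduct, hnorm, zero_dotProduct]
  rw [h0, h1]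
  have nn : ∀ {n : ℕ} (v : Fin n → ℝ), 0 ≤ v ⬝ᵥ v := by
    intro n v
    simpa using dotProduct_self_star_nonneg v
  have n0 := nn (A₀ *ᵥ e)
  have n1 := nn (A₁ *ᵥ e)
  have c0 := dotProduct_comm (A₀ *ᵥ e) (A₀ *ᵥ m - d₀)
  have c1 := dotProduct_comm (A₁ *ᵥ e) (A₁ *ᵥ m - d₁)
  simp only [add_dotProduct, dotProduct_add] at *
  linarith

theorem stmt14 {N₀ N₁ M : ℕ} (A₀ : Matrix (Fin N₀) (Fin M) ℝ) (A₁ : Matrix (Fin N₁) (Fin M) ℝ)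
    (d₀ : Fin N₀ → ℝ) (d₁ : Fin N₁ → ℝ)
    (h₀ : IsUnit (A₀ᵀ * A₀)) (h₁ : IsUnit (A₀ᵀ * A₀ + A₁ᵀ * A₁)) :
    ∀ x : Fin M → ℝ,
      (A₀ *ᵥ ((A₀ᵀ * A₀)⁻¹ *ᵥ (A₀ᵀ *ᵥ d₀) +
          (A₀ᵀ * A₀ + A₁ᵀ * A₁)⁻¹ *ᵥ (A₁ᵀ *ᵥ (d₁ - A₁ *ᵥ ((A₀ᵀ * A₀)⁻¹ *ᵥ (A₀ᵀ *ᵥ d₀))))) - d₀) ⬝ᵥ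
        (A₀ *ᵥ ((A₀ᵀ * A₀)⁻¹ *ᵥ (A₀ᵀ *ᵥ d₀) +
          (A₀ᵀ * A₀ + A₁ᵀ * A₁)⁻¹ *ᵥ (A₁ᵀ *ᵥ (d₁ - A₁ *ᵥ ((A₀ᵀ * A₀)⁻¹ *ᵥ (A₀ᵀ *ᵥ d₀))))) - d₀) +
      (A₁ *ᵥ ((A₀ᵀ * A₀)⁻¹ *ᵥ (A₀ᵀ *ᵥ d₀) +
          (A₀ᵀ * A₀ + A₁ᵀ * A₁)⁻¹ *ᵥ (A₁ᵀ *ᵥ (d₁ - A₁ *ᵥ ((A₀ᵀ * A₀)⁻¹ *ᵥ (A₀ᵀ *ᵥ d₀))))) - d₁) ⬝ᵥ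
        (A₁ *ᵥ ((A₀ᵀ * A₀)⁻¹ *ᵥ (A₀ᵀ *ᵥ d₀) +
          (A₀ᵀ * A₀ + A₁ᵀ * A₁)⁻¹ *ᵥ (A₁ᵀ *ᵥ (d₁ - A₁ *ᵥ ((A₀ᵀ * A₀)⁻¹ *ᵥ (A₀ᵀ *ᵥ d₀))))) - d₁)
      ≤ (A₀ *ᵥ x - d₀) ⬝ᵥ (A₀ *ᵥ x - d₀) + (A₁ *ᵥ x - d₁) ⬝ᵥ (A₁ *ᵥ x - d₁) := by
  intro x
  set m₀ : Fin M → ℝ := (A₀ᵀ * A₀)⁻¹ *ᵥ (A₀ᵀ *ᵥ d₀) with hm₀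
  set B : Matrix (Fin M) (Fin M) ℝ := A₀ᵀ * A₀ + A₁ᵀ * A₁ with hB
  set m₁ : Fin M → ℝ := m₀ + B⁻¹ *ᵥ (A₁ᵀ *ᵥ (d₁ - A₁ *ᵥ m₀)) with hm₁
  have hinv₀ : (A₀ᵀ * A₀) * (A₀ᵀ * A₀)⁻¹ = 1 :=
    Matrix.mul_nonsing_inv _ ((Matrix.isUnit_iff_isUnit_det _).mp h₀)
  have hinv₁ : B * B⁻¹ = 1 :=
    Matrix.mul_nonsing_inv _ ((Matrix.isUnit_iff_isUnit_det _).mp h₁)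
  have hgram : (A₀ᵀ * A₀) *ᵥ m₀ = A₀ᵀ *ᵥ d₀ := by
    rw [hm₀, mulVec_mulVec, hinv₀, one_mulVec]
  clear_value m₁ B m₀
  have cancel : ∀ v : Fin M → ℝ, B *ᵥ (B⁻¹ *ᵥ v) = v := fun v => by
    rw [mulVec_mulVec, hinv₁, one_mulVec]
  have hBm : B *ᵥ m₁ = A₀ᵀ *ᵥ d₀ + A₁ᵀ *ᵥ d₁ := by
    rw [hm₁, mulVec_add, cancel, hB, add_mulVec, hgram, mulVec_sub, ← mulVec_mulVec]
    abel
  apply aux_lsq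
  rw [mulVec_sub, mulVec_sub, mulVec_mulVec, mulVec_mulVec]
  have : (A₀ᵀ * A₀) *ᵥ m₁ + (A₁ᵀ * A₁) *ᵥ m₁ = A₀ᵀ *ᵥ d₀ + A₁ᵀ *ᵥ d₁ := by
    rw [← add_mulVec, ← hB, hBm]
  rw [sub_add_sub_comm, this]
  abel
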